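/- Let Z be a random vector in ℝ^d defined on a probability space with ∫ ZZᵀ dμ invertible, and let f be C¹. Then the infidelity-minimizing explanation equals γ* = (∫ ZZᵀ dμ)⁻¹ (∫ ZZᵀ · IG(f,x,Z) dμ), where IG(f,x,Z) = ∫₀¹ ∇f(x + (t-1)Z) dt. -/

import Mathlib

/-!
The fundamental theorem of calculus along the segment from `x - Z` to `x` gives
`Zᵀ IG(f, x, Z) = f x - f (x - Z)`, so `∫ Z Zᵀ IG dμ = ∫ Z (f x - f (x - Z)) dμ` and `γstar` solves
the normal equations `(∫ Z Zᵀ dμ) γ = ∫ Z (f x - f (x - Z)) dμ`. Expanding the infidelity of any `γ`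
around `γstar` leaves a cross term, whose integral vanishes by the normal equations, plus the
nonnegative `(Zᵀ (γ - γstar))²`.
-/

open MeasureTheory Matrix

noncomputable def integratedGradient {ι : Type*} [Fintype ι] [DecidableEq ι]
    (f : (ι → ℝ) → ℝ) (x z : ι → ℝ) (j : ι) : ℝ :=
  ∫ t in (0:ℝ)..1, fderiv ℝ f (x + (t - 1) • z) (Pi.single j 1)

section IntegratedGradient

variable {E F : Type*} [NormedAddCommGroup E] [NormedSpace ℝ E]
  [NormedAddCommGroup F] [NormedSpace ℝ F] {f : E → F}

theorem continuous_fderiv_segment (hf : ContDiff ℝ 1 f) (x z : E) :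
    Continuous fun t : ℝ => fderiv ℝ f (x + (t - 1) • z) :=
  (hf.continuous_fderiv one_ne_zero).comp (by fun_prop)

theorem integral_fderiv_segment_apply [CompleteSpace F] (hf : ContDiff ℝ 1 f) (x z : E) :
    ∫ t in (0:ℝ)..1, fderiv ℝ f (x + (t - 1) • z) z = f x - f (x - z) := by
  have hderiv (t : ℝ) : HasDerivAt (fun t => f (x + (t - 1) • z))
      (fderiv ℝ f (x + (t - 1) • z) z) t := by
    have hpath : HasDerivAt (fun t : ℝ => x + (t - 1) • z) z t := by
      simpa using (((hasDerivAt_id t).sub_const 1).smul_const z).const_add x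
    exact ((hf.differentiable one_ne_zero _).hasFDerivAt).comp_hasDerivAt t hpath
  rw [intervalIntegral.integral_eq_sub_of_hasDerivAt (fun t _ => hderiv t)
    (((continuous_fderiv_segment hf x z).clm_apply continuous_const).intervalIntegrable 0 1)]
  simp [sub_eq_add_neg]

end IntegratedGradient

theorem dotProduct_integratedGradient {ι : Type*} [Fintype ι] [DecidableEq ι]
    {f : (ι → ℝ) → ℝ} (hf : ContDiff ℝ 1 f) (x z : ι → ℝ) :
    z ⬝ᵥ integratedGradient f x z = f x - f (x - z) := by
  have hint := (continuous_fderiv_segment hf x z).intervalIntegrable (μ := volume) 0 1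
  set L := ∫ t in (0:ℝ)..1, fderiv ℝ f (x + (t - 1) • z)
  have hIG : integratedGradient f x z = fun j => L (Pi.single j 1) := by
    ext j
    exact (ContinuousLinearMap.intervalIntegral_apply hint _).symm
  calc z ⬝ᵥ integratedGradient f x z = L z := by
        conv_rhs => rw [pi_eq_sum_univ' z, map_sum]
        simp [hIG, dotProduct]
    _ = f x - f (x - z) := by
        rw [ContinuousLinearMap.intervalIntegral_apply hint, integral_fderiv_segment_apply hf]

section LeastSquares

variable {Ω ι : Type*} [MeasurableSpace Ω] [Fintype ι] {μ : Measure Ω} {Z : Ω → ι → ℝ}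

theorem integrable_mul_dotProduct (hZZ : ∀ i j, Integrable (fun ω => Z ω i * Z ω j) μ)
    (i : ι) (v : ι → ℝ) : Integrable (fun ω => Z ω i * (Z ω ⬝ᵥ v)) μ := by
  simp only [dotProduct, Finset.mul_sum, ← mul_assoc]
  exact integrable_finsetSum _ fun j _ => (hZZ i j).mul_const (v j)

theorem integral_mul_dotProduct (hZZ : ∀ i j, Integrable (fun ω => Z ω i * Z ω j) μ)
    (i : ι) (v : ι → ℝ) :
    ∫ ω, Z ω i * (Z ω ⬝ᵥ v) ∂μ = ∑ j, (∫ ω, Z ω i * Z ω j ∂μ) * v j := by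
  simp only [dotProduct, Finset.mul_sum, ← mul_assoc]
  rw [integral_finsetSum _ fun j _ => (hZZ i j).mul_const (v j)]
  simp only [integral_mul_const]

theorem integral_mul_dotProduct_sub_eq_zero {g : Ω → ℝ} {M : Matrix ι ι ℝ} {v : ι → ℝ}
    (hZZ : ∀ i j, Integrable (fun ω => Z ω i * Z ω j) μ)
    (hZg : ∀ i, Integrable (fun ω => Z ω i * g ω) μ)
    (hM : ∀ i j, M i j = ∫ ω, Z ω i * Z ω j ∂μ) (hMv : M *ᵥ v = fun i => ∫ ω, Z ω i * g ω ∂μ)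
    (i : ι) : ∫ ω, Z ω i * (Z ω ⬝ᵥ v - g ω) ∂μ = 0 := by
  calc ∫ ω, Z ω i * (Z ω ⬝ᵥ v - g ω) ∂μ
      = ∫ ω, Z ω i * (Z ω ⬝ᵥ v) ∂μ - ∫ ω, Z ω i * g ω ∂μ := by
        simp only [mul_sub]
        exact integral_sub (integrable_mul_dotProduct hZZ i v) (hZg i)
    _ = (M *ᵥ v) i - ∫ ω, Z ω i * g ω ∂μ := by
        rw [integral_mul_dotProduct hZZ]
        simp only [mulVec, dotProduct, hM]
    _ = 0 := by rw [hMv, sub_self]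

theorem integral_sq_dotProduct_sub_le_of_normal_eq {g : Ω → ℝ} {γ₀ γ : ι → ℝ}
    (hZZ : ∀ i j, Integrable (fun ω => Z ω i * Z ω j) μ)
    (hZg : ∀ i, Integrable (fun ω => Z ω i * g ω) μ)
    (hγ₀ : Integrable (fun ω => (Z ω ⬝ᵥ γ₀ - g ω) ^ 2) μ)
    (hγ : Integrable (fun ω => (Z ω ⬝ᵥ γ - g ω) ^ 2) μ)
    (hnormal : ∀ i, ∫ ω, Z ω i * (Z ω ⬝ᵥ γ₀ - g ω) ∂μ = 0) :
    ∫ ω, (Z ω ⬝ᵥ γ₀ - g ω) ^ 2 ∂μ ≤ ∫ ω, (Z ω ⬝ᵥ γ - g ω) ^ 2 ∂μ := by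
  set δ := γ - γ₀
  set cross := fun ω => ∑ i, δ i * (Z ω i * (Z ω ⬝ᵥ γ₀ - g ω))
  have hterm (i : ι) : Integrable (fun ω => Z ω i * (Z ω ⬝ᵥ γ₀ - g ω)) μ := by
    simp only [mul_sub]
    exact (integrable_mul_dotProduct hZZ i γ₀).sub (hZg i)
  have hcross : Integrable cross μ :=
    integrable_finsetSum _ fun i _ => (hterm i).const_mul (δ i)
  have hcross_zero : ∫ ω, cross ω ∂μ = 0 := by
    rw [integral_finsetSum _ fun i _ => (hterm i).const_mul (δ i)]
    simp [integral_const_mul, hnormal]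
  have hexpand (ω : Ω) : (Z ω ⬝ᵥ γ - g ω) ^ 2 - (Z ω ⬝ᵥ γ₀ - g ω) ^ 2 - 2 * cross ω
      = (Z ω ⬝ᵥ δ) ^ 2 := by
    have hcross_eq : cross ω = (Z ω ⬝ᵥ δ) * (Z ω ⬝ᵥ γ₀ - g ω) := by
      simp only [cross, dotProduct, Finset.sum_mul]
      exact Finset.sum_congr rfl fun i _ => by ring
    have hsplit : Z ω ⬝ᵥ γ = Z ω ⬝ᵥ γ₀ + Z ω ⬝ᵥ δ := by
      rw [← dotProduct_add, add_sub_cancel]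
    rw [hcross_eq, hsplit]
    ring
  have hgap : 0 ≤ ∫ ω, (Z ω ⬝ᵥ γ - g ω) ^ 2 - (Z ω ⬝ᵥ γ₀ - g ω) ^ 2 - 2 * cross ω ∂μ :=
    integral_nonneg fun ω => (hexpand ω).symm ▸ sq_nonneg _
  have hdiff : Integrable (fun ω => (Z ω ⬝ᵥ γ - g ω) ^ 2 - (Z ω ⬝ᵥ γ₀ - g ω) ^ 2) μ :=
    hγ.sub hγ₀
  rw [integral_sub hdiff (hcross.const_mul 2), integral_sub hγ hγ₀,
    integral_const_mul, hcross_zero] at hgap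
  linarith

end LeastSquares

theorem stmt_5_general {d : ℕ} {Ω : Type*} [MeasurableSpace Ω] (μ : Measure Ω)
    (Z : Ω → Fin d → ℝ)
    (f : (Fin d → ℝ) → ℝ) (hf : ContDiff ℝ 1 f) (x : Fin d → ℝ)
    (M : Matrix (Fin d) (Fin d) ℝ)
    (hM : ∀ i j, M i j = ∫ ω, Z ω i * Z ω j ∂μ) (hMinv : IsUnit M.det)
    (IG : Ω → Fin d → ℝ)
    (hIG : ∀ ω j, IG ω j = ∫ t in (0:ℝ)..1, fderiv ℝ f (x + (t - 1) • Z ω) (Pi.single j 1))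
    (hZZ : ∀ i j, Integrable (fun ω => Z ω i * Z ω j) μ)
    (hZZIG : ∀ i, Integrable (fun ω => ∑ j, Z ω i * Z ω j * IG ω j) μ)
    (hIF : ∀ γ : Fin d → ℝ,
      Integrable (fun ω => (∑ i, Z ω i * γ i - (f x - f (x - Z ω))) ^ 2) μ)
    (γstar : Fin d → ℝ)
    (hγstar : γstar = M⁻¹ *ᵥ fun i => ∫ ω, ∑ j, Z ω i * Z ω j * IG ω j ∂μ) :
    ∀ γ : Fin d → ℝ,
      ∫ ω, (∑ i, Z ω i * γstar i - (f x - f (x - Z ω))) ^ 2 ∂μ ≤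
      ∫ ω, (∑ i, Z ω i * γ i - (f x - f (x - Z ω))) ^ 2 ∂μ := by
  intro γ
  set g : Ω → ℝ := fun ω => f x - f (x - Z ω)
  have hZIG (ω : Ω) : Z ω ⬝ᵥ IG ω = g ω := by
    rw [show IG ω = integratedGradient f x (Z ω) from funext (hIG ω)]
    exact dotProduct_integratedGradient hf x (Z ω)
  have hZZIG_eq (i : Fin d) (ω : Ω) : ∑ j, Z ω i * Z ω j * IG ω j = Z ω i * g ω := by
    simp only [← hZIG ω, dotProduct, Finset.mul_sum, mul_assoc]
  have hZg (i : Fin d) : Integrable (fun ω => Z ω i * g ω) μ := by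
    simpa only [hZZIG_eq] using hZZIG i
  have hMγstar : M *ᵥ γstar = fun i => ∫ ω, Z ω i * g ω ∂μ := by
    simp only [hγstar, mulVec_mulVec, mul_nonsing_inv M hMinv, one_mulVec, hZZIG_eq]
  exact integral_sq_dotProduct_sub_le_of_normal_eq hZZ hZg (hIF γstar) (hIF γ)
    (integral_mul_dotProduct_sub_eq_zero hZZ hZg hM hMγstar)

theorem stmt_5 {d : ℕ} {Ω : Type*} [MeasurableSpace Ω] (μ : Measure Ω) [IsProbabilityMeasure μ]
    (Z : Ω → Fin d → ℝ) (hZmeas : Measurable Z)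
    (f : (Fin d → ℝ) → ℝ) (hf : ContDiff ℝ 1 f) (x : Fin d → ℝ)
    (M : Matrix (Fin d) (Fin d) ℝ)
    (hM : ∀ i j, M i j = ∫ ω, Z ω i * Z ω j ∂μ) (hMinv : IsUnit M.det)
    (IG : Ω → Fin d → ℝ)
    (hIG : ∀ ω j, IG ω j = ∫ t in (0:ℝ)..1, fderiv ℝ f (x + (t - 1) • Z ω) (Pi.single j 1))
    (hZZ : ∀ i j, Integrable (fun ω => Z ω i * Z ω j) μ)
    (hZZIG : ∀ i, Integrable (fun ω => ∑ j, Z ω i * Z ω j * IG ω j) μ)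
    (hIF : ∀ γ : Fin d → ℝ,
      Integrable (fun ω => (∑ i, Z ω i * γ i - (f x - f (x - Z ω))) ^ 2) μ)
    (γstar : Fin d → ℝ)
    (hγstar : γstar = M⁻¹ *ᵥ fun i => ∫ ω, ∑ j, Z ω i * Z ω j * IG ω j ∂μ) :
    ∀ γ : Fin d → ℝ,
      ∫ ω, (∑ i, Z ω i * γstar i - (f x - f (x - Z ω))) ^ 2 ∂μ ≤
      ∫ ω, (∑ i, Z ω i * γ i - (f x - f (x - Z ω))) ^ 2 ∂μ :=
  stmt_5_general μ Z f hf x M hM hMinv IG hIG hZZ hZZIG hIF γstar hγstar
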